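/- arXiv:1508.02845 — 2 statements merged into one kernel-verified Lean document; each statement's English description precedes it below -/
import Mathlib

section
/- Let A be a maximal monotone operator on ℝ^N that is cocoercive, i.e., there exists α > 0 such that ⟨x₁ − x₂, y₁ − y₂⟩ ≥ α‖y₁ − y₂‖² for all (x₁,y₁), (x₂,y₂) in the graph of A, and suppose A has a zero w. Then A is demipositive. -/
open RealInnerProductSpace Filter Topology

/-- A cocoercive maximal monotone operator with a zero is demipositive. -/
theorem stmt_4 {N : ℕ}
    (A : EuclideanSpace ℝ (Fin N) → Set (EuclideanSpace ℝ (Fin N)))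
    (hmono : ∀ x x' y y', y ∈ A x → y' ∈ A x' → 0 ≤ ⟪y - y', x - x'⟫)
    (hmax : ∀ x y, (∀ x' y', y' ∈ A x' → 0 ≤ ⟪y - y', x - x'⟫) → y ∈ A x)
    (α : ℝ) (hα : 0 < α)
    (hcoco : ∀ x₁ y₁ x₂ y₂, y₁ ∈ A x₁ → y₂ ∈ A x₂ →
      α * ‖y₁ - y₂‖ ^ 2 ≤ ⟪x₁ - x₂, y₁ - y₂⟫)
    (w : EuclideanSpace ℝ (Fin N)) (hw : 0 ∈ A w) :
    ∀ (u : EuclideanSpace ℝ (Fin N))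
      (un vn : ℕ → EuclideanSpace ℝ (Fin N)),
      (∀ n, vn n ∈ A (un n)) →
      Tendsto un atTop (𝓝 u) →
      (∃ M, ∀ n, ‖vn n‖ ≤ M) →
      Tendsto (fun n => ⟪un n - w, vn n⟫) atTop (𝓝 0) →
      0 ∈ A u := by
  intro u un vn hA hun _ hinner
  -- Step 1: vn → 0
  have hsq : ∀ n, α * ‖vn n‖ ^ 2 ≤ ⟪un n - w, vn n⟫ := by
    intro n
    have := hcoco (un n) (vn n) w 0 (hA n) hw
    simpa using this
  have hsq0 : Tendsto (fun n => α * ‖vn n‖ ^ 2) atTop (𝓝 0) := by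
    refine squeeze_zero (fun n => by positivity) hsq hinner
  have hnorm0 : Tendsto (fun n => ‖vn n‖ ^ 2) atTop (𝓝 0) := by
    have := hsq0.const_mul (α⁻¹)
    simpa [inv_mul_cancel_left₀ hα.ne'] using this
  have hv0 : Tendsto vn atTop (𝓝 0) := by
    rw [tendsto_iff_norm_sub_tendsto_zero]
    have : Tendsto (fun n => ‖vn n‖) atTop (𝓝 0) := by
      have h := hnorm0.sqrt
      simpa [Real.sqrt_sq (norm_nonneg _)] using h
    simpa using this
  -- Step 2: use maximality
  apply hmax
  intro x' y' hy'
  have hlim : Tendsto (fun n => ⟪vn n - y', un n - x'⟫) atTop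
      (𝓝 ⟪(0 : EuclideanSpace ℝ (Fin N)) - y', u - x'⟫) := by
    exact Tendsto.inner (hv0.sub tendsto_const_nhds) (hun.sub tendsto_const_nhds)
  exact ge_of_tendsto hlim (Eventually.of_forall fun n =>
    hmono (un n) x' (vn n) y' (hA n) hy')
end

section
/- Let A, B be maximal monotone operators on ℝ^N with dom(B) = ℝ^N, and for one zero x⋆ of A + B fix a⋆ ∈ A(x⋆), b⋆ ∈ B(x⋆) with a⋆ + b⋆ = 0. Let γ > 0, x ∈ ℝ^N, b ∈ B(x), and set x⁺ = (I + γA)⁻¹(x − γb). Then for every β > 0, ‖x⁺ − x⋆‖² ≤ ‖x − x⋆‖² − γ²(1 − β⁻¹)‖Y‖² + γ²(1 + β⁻¹)‖b‖² + 2γ²β‖a⋆‖² − 2γ⟨a⋆ + b⋆, x − x⋆⟩, where Y = (x − γb − x⁺)/γ. -/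
open RealInnerProductSpace

/-- A set-valued operator on `ℝ^N` is monotone. -/
def MonotoneOp {N : ℕ}
    (A : EuclideanSpace ℝ (Fin N) → Set (EuclideanSpace ℝ (Fin N))) : Prop :=
  ∀ x x' y y', y ∈ A x → y' ∈ A x' → 0 ≤ ⟪y - y', x - x'⟫

/-- Maximal monotone set-valued operator on `ℝ^N`. -/
def MaximalMonotoneOp {N : ℕ}
    (A : EuclideanSpace ℝ (Fin N) → Set (EuclideanSpace ℝ (Fin N))) : Prop :=
  MonotoneOp A ∧
    ∀ x y, (∀ x' y', y' ∈ A x' → 0 ≤ ⟪y - y', x - x'⟫) → y ∈ A x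

/-- One-step descent inequality for the stochastic forward-backward step. -/
theorem stmt_15 {N : ℕ}
    (A B : EuclideanSpace ℝ (Fin N) → Set (EuclideanSpace ℝ (Fin N)))
    (hA : MaximalMonotoneOp A) (hB : MaximalMonotoneOp B)
    (hdomB : ∀ x, (B x).Nonempty)
    (γ : ℝ) (hγ : 0 < γ)
    (x xstar astar bstar b xplus Y : EuclideanSpace ℝ (Fin N))
    (hastar : astar ∈ A xstar) (hbstar : bstar ∈ B xstar)
    (hzero : astar + bstar = 0)
    (hb : b ∈ B x)
    (hYdef : Y = γ⁻¹ • (x - γ • b - xplus))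
    (hYA : Y ∈ A xplus) :
    ∀ β : ℝ, 0 < β →
      ‖xplus - xstar‖ ^ 2 ≤
        ‖x - xstar‖ ^ 2 - γ ^ 2 * (1 - β⁻¹) * ‖Y‖ ^ 2 +
          γ ^ 2 * (1 + β⁻¹) * ‖b‖ ^ 2 + 2 * γ ^ 2 * β * ‖astar‖ ^ 2 -
          2 * γ * ⟪astar + bstar, x - xstar⟫ := by
  intro β hβ
  have h1 : 0 ≤ ⟪Y - astar, xplus - xstar⟫ := hA.1 xplus xstar Y astar hYA hastar
  have h2 : 0 ≤ ⟪b - bstar, x - xstar⟫ := hB.1 x xstar b bstar hb hbstar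
  have hbs : bstar = -astar := (neg_eq_of_add_eq_zero_right hzero).symm
  subst hbs
  have hxp : xplus = x - γ • b - γ • Y := by
    rw [hYdef, smul_smul, mul_inv_cancel₀ hγ.ne', one_smul]
    abel
  subst hxp
  have h3 : 0 ≤ ‖(2*β) • astar - (b + Y)‖ ^ 2 := sq_nonneg _
  have h4 : 0 ≤ ‖b - Y‖ ^ 2 := sq_nonneg _
  simp only [← real_inner_self_eq_norm_sq] at h3 h4 ⊢
  simp only [inner_sub_left, inner_sub_right, inner_add_left, inner_add_right,
    inner_neg_left, inner_neg_right, real_inner_smul_left, real_inner_smul_right] at h1 h2 h3 h4 ⊢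
  simp only [real_inner_comm x astar, real_inner_comm xstar astar, real_inner_comm x b,
    real_inner_comm xstar b, real_inner_comm x Y, real_inner_comm xstar Y,
    real_inner_comm b astar, real_inner_comm Y astar, real_inner_comm Y b,
    real_inner_comm xstar x] at h1 h2 h3 h4 ⊢
  have P1 := mul_nonneg (by positivity : (0:ℝ) ≤ 2*γ) h1
  have P3 := mul_nonneg (by positivity : (0:ℝ) ≤ γ^2*β⁻¹/2) h3
  have P4 := mul_nonneg (by positivity : (0:ℝ) ≤ γ^2*β⁻¹/2) h4
  have P2 := mul_nonneg (by positivity : (0:ℝ) ≤ 2*γ) h2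
  have Ea : γ^2*β⁻¹/2*(4*β^2*⟪astar, astar⟫) = 2*γ^2*β*⟪astar, astar⟫ := by
    field_simp; ring
  have Eb : γ^2*β⁻¹/2*(4*β*(⟪b, astar⟫ + ⟪Y, astar⟫)) = 2*γ^2*(⟪b, astar⟫ + ⟪Y, astar⟫) := by
    field_simp; ring
  linarith [P1, P2, P3, P4, Ea, Eb]
end
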